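/- arXiv:1403.1197 — 4 statements merged into one kernel-verified Lean document; each statement's English description precedes it below -/
import Mathlib

section
/- Let k be a field, n ≥ 2, and let a, b, c, d ∈ k[x₀,…,x_{n−1}] be homogeneous of degrees r−1, r, r−2, r−1 respectively with ad − bc ≠ 0 and gcd(a xₙ + b, c xₙ + d) = 1. Then the rational map F of Pⁿ given by ((c xₙ + d)x₀ : ⋯ : (c xₙ + d)x_{n−1} : a xₙ + b) is birational, with inverse given (up to a common factor) by ((−c xₙ + a)x₀ : ⋯ : (−c xₙ + a)x_{n−1} : d xₙ − b). -/
/-!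
On the line through `o = (0:⋯:0:1)` and `(x₀:⋯:x_{n−1})` the map `F_M` acts on the coordinate
`xₙ` by the Möbius transformation whose matrix `M = (a b; c d)` has forms in `x₀,…,x_{n−1}` as
entries. If the entries of `M'` have degrees `(r−1, r; r−2, r−1)`, substituting `F_M` into
`F_{M'}` multiplies the matrices: `F_{M'} ∘ F_M = (cxₙ + d)^(r−1) · F_{M'M}`. For `M' = adj M`
both `M'M` and `MM'` equal `(ad − bc) · 1`, and `F_{δ·1}` is `δ` times the identity.
-/

open MvPolynomial

theorem MvPolynomial.IsHomogeneous.aeval_smul {σ R S : Type*} [CommSemiring R]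
    [CommSemiring S] [Algebra R S] {p : MvPolynomial σ R} {m : ℕ} (hp : p.IsHomogeneous m)
    (t : S) (f : σ → S) :
    MvPolynomial.aeval (t • f) p = t ^ m * MvPolynomial.aeval f p := by
  conv_lhs => rw [p.as_sum]
  conv_rhs => rw [p.as_sum]
  simp only [map_sum, Finset.mul_sum, aeval_monomial]
  refine Finset.sum_congr rfl fun s hs => ?_
  have hdeg : (s.sum fun _ e => e) = m := by
    simpa [Finsupp.weight_apply, Finsupp.sum] using hp (mem_support_iff.mp hs)
  simp only [Pi.smul_apply, smul_eq_mul, Finsupp.prod, mul_pow, Finset.prod_mul_distrib,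
    Finset.prod_pow_eq_pow_sum, ← hdeg, Finsupp.sum]
  ring

namespace DeJonquieres

variable {k : Type*} [CommRing k] {n : ℕ}

/-- The numerator (`i = 0`) or denominator (`i = 1`) of the Möbius transformation with
matrix `M`. -/
noncomputable def mobiusRow (M : Matrix (Fin 2) (Fin 2) (MvPolynomial (Fin n) k)) (i : Fin 2) :
    MvPolynomial (Fin (n + 1)) k :=
  rename Fin.castSucc (M i 0) * X (Fin.last n) + rename Fin.castSucc (M i 1)

noncomputable def deJonquieresMap (M : Matrix (Fin 2) (Fin 2) (MvPolynomial (Fin n) k)) :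
    Fin (n + 1) → MvPolynomial (Fin (n + 1)) k :=
  Fin.lastCases (mobiusRow M 0) fun j => mobiusRow M 1 * X j.castSucc

/-- With `r = m + 2`, the entries have degrees `(r−1, r; r−2, r−1)`. -/
def IsDeJonquieresMatrix (m : ℕ) (M : Matrix (Fin 2) (Fin 2) (MvPolynomial (Fin n) k)) : Prop :=
  ∀ i j : Fin 2, (M i j).IsHomogeneous (m + 1 + j - i)

variable (M : Matrix (Fin 2) (Fin 2) (MvPolynomial (Fin n) k))

theorem deJonquieresMap_last : deJonquieresMap M (Fin.last n) = mobiusRow M 0 :=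
  Fin.lastCases_last

theorem deJonquieresMap_castSucc (j : Fin n) :
    deJonquieresMap M j.castSucc = mobiusRow M 1 * X j.castSucc :=
  Fin.lastCases_castSucc j

theorem aeval_deJonquieresMap_X_last :
    aeval (deJonquieresMap M) (X (R := k) (Fin.last n)) = mobiusRow M 0 := by
  rw [aeval_X, deJonquieresMap_last]

theorem aeval_deJonquieresMap_rename {p : MvPolynomial (Fin n) k} {e : ℕ}
    (hp : p.IsHomogeneous e) :
    aeval (deJonquieresMap M) (rename Fin.castSucc p) =
      mobiusRow M 1 ^ e * rename Fin.castSucc p := by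
  have hcomp : deJonquieresMap M ∘ Fin.castSucc = mobiusRow M 1 • (X ∘ Fin.castSucc) := by
    funext j
    simp [deJonquieresMap_castSucc]
  rw [aeval_rename, hcomp, hp.aeval_smul, rename_eq_aeval]

theorem aeval_deJonquieresMap_mobiusRow {m : ℕ}
    {M' : Matrix (Fin 2) (Fin 2) (MvPolynomial (Fin n) k)} (hM' : IsDeJonquieresMatrix m M')
    (i : Fin 2) :
    aeval (deJonquieresMap M) (mobiusRow M' i) =
      mobiusRow M 1 ^ (m + 1 - i) * mobiusRow (M' * M) i := by
  have hren := fun j => aeval_deJonquieresMap_rename M (hM' i j)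
  simp only [mobiusRow, map_add, map_mul, hren, aeval_deJonquieresMap_X_last, Matrix.mul_apply,
    Fin.sum_univ_two]
  fin_cases i <;> simp <;> ring

theorem aeval_deJonquieresMap {m : ℕ} {M' : Matrix (Fin 2) (Fin 2) (MvPolynomial (Fin n) k)}
    (hM' : IsDeJonquieresMatrix m M') (i : Fin (n + 1)) :
    aeval (deJonquieresMap M) (deJonquieresMap M' i) =
      mobiusRow M 1 ^ (m + 1) * deJonquieresMap (M' * M) i := by
  induction i using Fin.lastCases with
  | last => simpa [deJonquieresMap_last] using aeval_deJonquieresMap_mobiusRow M hM' 0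
  | cast j =>
    rw [deJonquieresMap_castSucc, deJonquieresMap_castSucc, map_mul,
      aeval_deJonquieresMap_mobiusRow M hM' 1, aeval_X, deJonquieresMap_castSucc]
    simp only [Fin.val_one, Nat.add_sub_cancel]
    ring

theorem deJonquieresMap_smul_one (δ : MvPolynomial (Fin n) k) (i : Fin (n + 1)) :
    deJonquieresMap (δ • 1 : Matrix (Fin 2) (Fin 2) _) i = rename Fin.castSucc δ * X i := by
  induction i using Fin.lastCases <;>
    simp [deJonquieresMap_last, deJonquieresMap_castSucc, mobiusRow]

theorem eq_zero_of_mobiusRow_eq_zero {i : Fin 2} (h : mobiusRow M i = 0) :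
    M i 0 = 0 ∧ M i 1 = 0 := by
  have hconst : M i 1 = 0 := by
    let proj : Fin (n + 1) → MvPolynomial (Fin n) k := Fin.lastCases 0 X
    have hproj : proj ∘ Fin.castSucc = X := by
      funext j
      simp [proj]
    have hlast : proj (Fin.last n) = 0 := Fin.lastCases_last
    simpa only [mobiusRow, map_add, map_mul, aeval_rename, hproj, aeval_X_left_apply, aeval_X,
      hlast, mul_zero, zero_add, map_zero] using congrArg (aeval proj) h
  refine ⟨?_, hconst⟩
  rw [mobiusRow, hconst, map_zero, add_zero, isRegular_X.right.mul_right_eq_zero_iff] at h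
  exact rename_injective _ (Fin.castSucc_injective n) (h.trans (map_zero _).symm)

theorem mobiusRow_ne_zero (hM : M.det ≠ 0) (i : Fin 2) : mobiusRow M i ≠ 0 := by
  intro h
  obtain ⟨h0, h1⟩ := eq_zero_of_mobiusRow_eq_zero M h
  apply hM
  fin_cases i <;> simp_all [Matrix.det_fin_two]

section Coordinates

variable (a b c d : MvPolynomial (Fin n) k)

theorem deJonquieresMap_of :
    deJonquieresMap !![a, b; c, d] =
      Fin.lastCases (rename Fin.castSucc a * X (Fin.last n) + rename Fin.castSucc b)
        fun j => (rename Fin.castSucc c * X (Fin.last n) + rename Fin.castSucc d) * X j.castSucc :=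
  rfl

theorem deJonquieresMap_adjugate_of :
    deJonquieresMap !![a, b; c, d].adjugate =
      Fin.lastCases (rename Fin.castSucc d * X (Fin.last n) - rename Fin.castSucc b)
        fun j =>
          (-rename Fin.castSucc c * X (Fin.last n) + rename Fin.castSucc a) * X j.castSucc := by
  rw [Matrix.adjugate_fin_two_of]
  funext i
  induction i using Fin.lastCases <;>
    simp [deJonquieresMap_last, deJonquieresMap_castSucc, mobiusRow, sub_eq_add_neg]

end Coordinates

end DeJonquieres

open DeJonquieres in
theorem deJonquieres_birational_general {k : Type} [Field k] {n : ℕ} {r : ℕ}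
    (hr : 2 ≤ r) (a b c d : MvPolynomial (Fin n) k)
    (ha : a.IsHomogeneous (r - 1)) (hb : b.IsHomogeneous r)
    (hc : c.IsHomogeneous (r - 2)) (hd : d.IsHomogeneous (r - 1))
    (hdet : a * d - b * c ≠ 0) :
    ∃ h₁ h₂ : MvPolynomial (Fin (n + 1)) k, h₁ ≠ 0 ∧ h₂ ≠ 0 ∧
      ∀ i : Fin (n + 1),
        aeval (Fin.lastCases
            ((rename (Fin.castSucc) a) * X (Fin.last n) + rename (Fin.castSucc) b)
            (fun j : Fin n =>
              ((rename (Fin.castSucc) c) * X (Fin.last n) + rename (Fin.castSucc) d) *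
                X j.castSucc))
          (Fin.lastCases
            ((rename (Fin.castSucc) d) * X (Fin.last n) - rename (Fin.castSucc) b)
            (fun j : Fin n =>
              (-(rename (Fin.castSucc) c) * X (Fin.last n) + rename (Fin.castSucc) a) *
                X j.castSucc) i)
          = h₁ * X i ∧
        aeval (Fin.lastCases
            ((rename (Fin.castSucc) d) * X (Fin.last n) - rename (Fin.castSucc) b)
            (fun j : Fin n =>
              (-(rename (Fin.castSucc) c) * X (Fin.last n) + rename (Fin.castSucc) a) *
                X j.castSucc))
          (Fin.lastCases
            ((rename (Fin.castSucc) a) * X (Fin.last n) + rename (Fin.castSucc) b)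
            (fun j : Fin n =>
              ((rename (Fin.castSucc) c) * X (Fin.last n) + rename (Fin.castSucc) d) *
                X j.castSucc) i)
          = h₂ * X i := by
  obtain ⟨m, rfl⟩ : ∃ m, r = m + 2 := ⟨r - 2, by omega⟩
  set M : Matrix (Fin 2) (Fin 2) (MvPolynomial (Fin n) k) := !![a, b; c, d]
  have hM : IsDeJonquieresMatrix m M := by
    simpa [IsDeJonquieresMatrix, Fin.forall_fin_two, M] using ⟨⟨ha, hb⟩, hc, hd⟩
  have hadj : IsDeJonquieresMatrix m M.adjugate := by
    simpa [IsDeJonquieresMatrix, Fin.forall_fin_two, M, Matrix.adjugate_fin_two_of]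
      using ⟨⟨hd, hb.neg⟩, hc.neg, ha⟩
  have hdetM : M.det ≠ 0 := by rwa [Matrix.det_fin_two_of]
  have hdetAdj : M.adjugate.det ≠ 0 := by simpa [Matrix.det_adjugate]
  have hdetM' : rename Fin.castSucc M.det ≠ 0 :=
    (map_ne_zero_iff _ (rename_injective _ (Fin.castSucc_injective n))).mpr hdetM
  refine ⟨mobiusRow M 1 ^ (m + 1) * rename Fin.castSucc M.det,
    mobiusRow M.adjugate 1 ^ (m + 1) * rename Fin.castSucc M.det,
    mul_ne_zero (pow_ne_zero _ (mobiusRow_ne_zero M hdetM 1)) hdetM',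
    mul_ne_zero (pow_ne_zero _ (mobiusRow_ne_zero M.adjugate hdetAdj 1)) hdetM',
    fun i => ⟨?_, ?_⟩⟩
  · have h := aeval_deJonquieresMap M hadj i
    rw [Matrix.adjugate_mul, deJonquieresMap_smul_one, ← mul_assoc] at h
    simpa only [M, deJonquieresMap_of, deJonquieresMap_adjugate_of] using h
  · have h := aeval_deJonquieresMap M.adjugate hM i
    rw [Matrix.mul_adjugate, deJonquieresMap_smul_one, ← mul_assoc] at h
    simpa only [M, deJonquieresMap_of, deJonquieresMap_adjugate_of] using h

/-- The de Jonquières-type map `F = ((cxₙ+d)x₀ : ⋯ : (cxₙ+d)x_{n−1} : axₙ+b)` of `Pⁿ`,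
with `a,b,c,d` forms in `x₀,…,x_{n−1}` of degrees `r−1, r, r−2, r−1` and `ad − bc ≠ 0`,
is birational, with inverse given (up to a common nonzero factor) by
`((−cxₙ+a)x₀ : ⋯ : (−cxₙ+a)x_{n−1} : dxₙ−b)`. -/
theorem deJonquieres_birational {k : Type} [Field k] {n : ℕ} (hn : 2 ≤ n) {r : ℕ}
    (hr : 2 ≤ r) (a b c d : MvPolynomial (Fin n) k)
    (ha : a.IsHomogeneous (r - 1)) (hb : b.IsHomogeneous r)
    (hc : c.IsHomogeneous (r - 2)) (hd : d.IsHomogeneous (r - 1))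
    (hdet : a * d - b * c ≠ 0)
    (hcop : IsRelPrime
      ((rename (Fin.castSucc) a) * X (Fin.last n) + rename (Fin.castSucc) b)
      ((rename (Fin.castSucc) c) * X (Fin.last n) + rename (Fin.castSucc) d)) :
    ∃ h₁ h₂ : MvPolynomial (Fin (n + 1)) k, h₁ ≠ 0 ∧ h₂ ≠ 0 ∧
      ∀ i : Fin (n + 1),
        aeval (Fin.lastCases
            ((rename (Fin.castSucc) a) * X (Fin.last n) + rename (Fin.castSucc) b)
            (fun j : Fin n =>
              ((rename (Fin.castSucc) c) * X (Fin.last n) + rename (Fin.castSucc) d) *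
                X j.castSucc))
          (Fin.lastCases
            ((rename (Fin.castSucc) d) * X (Fin.last n) - rename (Fin.castSucc) b)
            (fun j : Fin n =>
              (-(rename (Fin.castSucc) c) * X (Fin.last n) + rename (Fin.castSucc) a) *
                X j.castSucc) i)
          = h₁ * X i ∧
        aeval (Fin.lastCases
            ((rename (Fin.castSucc) d) * X (Fin.last n) - rename (Fin.castSucc) b)
            (fun j : Fin n =>
              (-(rename (Fin.castSucc) c) * X (Fin.last n) + rename (Fin.castSucc) a) *
                X j.castSucc))
          (Fin.lastCases
            ((rename (Fin.castSucc) a) * X (Fin.last n) + rename (Fin.castSucc) b)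
            (fun j : Fin n =>
              ((rename (Fin.castSucc) c) * X (Fin.last n) + rename (Fin.castSucc) d) *
                X j.castSucc) i)
          = h₂ * X i :=
  deJonquieres_birational_general hr a b c d ha hb hc hd hdet
end

section
/- Let R be a polynomial ring over a field and let I ⊂ R be an ideal of codimension 2 with a Hilbert–Burch resolution 0 → R^{n−1} → Rⁿ → I → 0. Let q, f ∈ R be forms with q nonzero, f ∈ I, and gcd(q, f) = 1 with f ∉ qI. Then the ideal J = (qI, f) = qI + (f) has projective dimension at most that of I, and in fact J admits a free resolution 0 → R^{n−1} ⊕ R → R^{n+1} → J → 0; in particular J is a perfect ideal of codimension 2 (Cohen–Macaulay). -/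
/-!
Choose `y` with `g₁ y = f`. Since `q` and `f` are coprime, a relation `q a + f b = 0` forces
`b = q s`, and then `a + s y` is a syzygy of `I`; this is exactness of the mapping cone
`F₂ ⊕ R → F₁ ⊕ R → J = qI + (f)` built from `0 → F₂ → F₁ → I → 0`.
For the height, `J ⊆ I` gives `ht J ≤ 2`; a prime `P ⊇ J` either contains `I`, or contains `q`
and `f`; then any prime element `p ∈ P` gives a chain `0 < (p) < P`, as `p` cannot divide
both `q` and `f`.
-/

open MvPolynomial

/-- The height (codimension) of an ideal: the infimum of the heights of the primes
containing it, in the prime spectrum ordered by inclusion. -/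
noncomputable def idealHeight {R : Type*} [CommRing R] (I : Ideal R) : ℕ∞ :=
  ⨅ P ∈ {P : PrimeSpectrum R | I ≤ P.asIdeal}, Order.height P

lemma idealHeight_mono {R : Type*} [CommRing R] {I J : Ideal R} (h : I ≤ J) :
    idealHeight I ≤ idealHeight J :=
  le_iInf₂ fun P hP => iInf₂_le P (h.trans hP)

lemma two_le_height_of_isRelPrime_mem {R : Type*} [CommRing R] [IsDomain R]
    [UniqueFactorizationMonoid R] {P : PrimeSpectrum R} {q f : R} (hq : q ≠ 0)
    (hcop : IsRelPrime q f) (hqP : q ∈ P.asIdeal) (hfP : f ∈ P.asIdeal) :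
    2 ≤ Order.height P := by
  obtain ⟨p, hpP, hp⟩ := P.isPrime.exists_mem_prime_of_ne_bot
    fun h => hq (by simpa [h] using hqP)
  let Pp : PrimeSpectrum R := ⟨Ideal.span {p}, (Ideal.span_singleton_prime hp.ne_zero).mpr hp⟩
  have hbot : ⊥ < Pp := by
    refine (PrimeSpectrum.asIdeal_lt_asIdeal _ _).mp (bot_lt_iff_ne_bot.mpr ?_)
    simpa [Pp, Ideal.span_singleton_eq_bot] using hp.ne_zero
  have hlt : Pp < P := by
    refine (PrimeSpectrum.asIdeal_lt_asIdeal _ _).mp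
      (lt_of_le_of_ne (Ideal.span_le.mpr (by simpa using hpP)) fun hPp => hp.not_isUnit ?_)
    simp only [Pp, ← hPp, Ideal.mem_span_singleton] at hqP hfP
    exact hcop hqP hfP
  calc (2 : ℕ∞) = 1 + 1 := rfl
    _ ≤ Order.height Pp + 1 := by
      gcongr
      exact Order.one_le_iff_pos.mpr (Order.height_pos_of_bot_lt hbot)
    _ ≤ Order.height P := Order.height_add_one_le hlt

lemma idealHeight_span_mul_sup_span {R : Type*} [CommRing R] [IsDomain R]
    [UniqueFactorizationMonoid R] {I : Ideal R} (hI : idealHeight I = 2) {q f : R}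
    (hq : q ≠ 0) (hfI : f ∈ I) (hcop : IsRelPrime q f) :
    idealHeight (Ideal.span {q} * I + Ideal.span {f}) = 2 := by
  refine le_antisymm ?_ (le_iInf₂ fun P hP => ?_)
  · exact hI ▸ idealHeight_mono
      (sup_le Ideal.mul_le_right ((Ideal.span_singleton_le_iff_mem I).mpr hfI))
  have hP : Ideal.span {q} * I ⊔ Ideal.span {f} ≤ P.asIdeal := hP
  have hfP : f ∈ P.asIdeal := hP (Ideal.mem_sup_right (Ideal.mem_span_singleton_self f))
  rcases P.isPrime.mul_le.mp (le_sup_left.trans hP) with hqP | hIP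
  · exact two_le_height_of_isRelPrime_mem hq hcop (hqP (Ideal.mem_span_singleton_self q)) hfP
  · exact hI ▸ iInf₂_le P hIP

namespace QFCone

variable {R F₁ F₂ : Type*} [CommRing R] [AddCommGroup F₁] [Module R F₁]
  [AddCommGroup F₂] [Module R F₂]

/-- With `y` a lift of `f` along `g₁`, `d₂` and `d₁` are the differentials of the mapping cone of
multiplication by `f` from `R` (resolving `q (I : f) = qR`) to the resolution `q • g₁` of `qI`. -/
noncomputable def d₂ (g₂ : F₂ →ₗ[R] F₁) (q : R) (y : F₁) : F₂ × R →ₗ[R] F₁ × R :=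
  (g₂ ∘ₗ LinearMap.fst R F₂ R - (LinearMap.snd R F₂ R).smulRight y).prod (q • LinearMap.snd R F₂ R)

noncomputable def d₁ (g₁ : F₁ →ₗ[R] R) (q f : R) : F₁ × R →ₗ[R] R :=
  q • (g₁ ∘ₗ LinearMap.fst R F₁ R) + f • LinearMap.snd R F₁ R

@[simp]
lemma d₂_apply (g₂ : F₂ →ₗ[R] F₁) (q : R) (y : F₁) (w : F₂ × R) :
    d₂ g₂ q y w = (g₂ w.1 - w.2 • y, q * w.2) := by
  simp [d₂, smul_eq_mul]

@[simp]
lemma d₁_apply (g₁ : F₁ →ₗ[R] R) (q f : R) (z : F₁ × R) : d₁ g₁ q f z = q * g₁ z.1 + f * z.2 := by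
  simp [d₁, smul_eq_mul]

lemma injective_d₂ {g₂ : F₂ →ₗ[R] F₁} {q : R} (y : F₁) (hinj : Function.Injective g₂)
    (hq : q ∈ nonZeroDivisors R) : Function.Injective (d₂ g₂ q y) := by
  rw [← LinearMap.ker_eq_bot, Submodule.eq_bot_iff]
  rintro ⟨v, t⟩ hw
  simp only [LinearMap.mem_ker, d₂_apply, Prod.mk_eq_zero] at hw
  obtain rfl : t = 0 := (mul_left_mem_nonZeroDivisors_eq_zero_iff hq).mp hw.2
  simpa using hinj (by simpa using hw.1)

lemma exact_d₂_d₁ [DecompositionMonoid R] {g₂ : F₂ →ₗ[R] F₁} {g₁ : F₁ →ₗ[R] R} {q f : R}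
    {y : F₁} (hex : Function.Exact g₂ g₁) (hy : g₁ y = f) (hq : q ∈ nonZeroDivisors R)
    (hcop : IsRelPrime q f) : Function.Exact (d₂ g₂ q y) (d₁ g₁ q f) := by
  intro z
  constructor
  · obtain ⟨x, t⟩ := z
    intro hz
    replace hz : q * g₁ x + f * t = 0 := by simpa using hz
    obtain ⟨s, rfl⟩ : q ∣ t :=
      hcop.dvd_of_dvd_mul_left ⟨-g₁ x, by linear_combination hz⟩
    have hxs : g₁ (x + s • y) = 0 := by
      rw [map_add, map_smul, hy, smul_eq_mul]
      exact (mul_left_mem_nonZeroDivisors_eq_zero_iff hq).mp (by linear_combination hz)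
    obtain ⟨v, hv⟩ := (hex _).mp hxs
    exact ⟨(v, s), by simp [hv]⟩
  · rintro ⟨w, rfl⟩
    simp only [d₂_apply, d₁_apply, map_sub, map_smul, hex.apply_apply_eq_zero, hy, smul_eq_mul]
    ring

lemma range_d₁ (g₁ : F₁ →ₗ[R] R) (q f : R) :
    LinearMap.range (d₁ g₁ q f) = Ideal.span {q} * LinearMap.range g₁ + Ideal.span {f} := by
  ext x
  simp only [LinearMap.mem_range, d₁_apply, Prod.exists, Submodule.add_eq_sup,
    Submodule.mem_sup, Ideal.mem_span_singleton_mul, Ideal.mem_span_singleton']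
  constructor
  · rintro ⟨z, t, rfl⟩
    exact ⟨_, ⟨g₁ z, ⟨z, rfl⟩, rfl⟩, _, ⟨t, mul_comm t f⟩, rfl⟩
  · rintro ⟨_, ⟨_, ⟨z, rfl⟩, rfl⟩, _, ⟨t, rfl⟩, rfl⟩
    exact ⟨z, t, by ring⟩

end QFCone

theorem hilbertBurch_qf_type_general {k : Type} [Field k] {m n : ℕ}
    (I : Ideal (MvPolynomial (Fin m) k))
    (g₂ : (Fin (n - 1) → MvPolynomial (Fin m) k) →ₗ[MvPolynomial (Fin m) k]
      (Fin n → MvPolynomial (Fin m) k))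
    (g₁ : (Fin n → MvPolynomial (Fin m) k) →ₗ[MvPolynomial (Fin m) k]
      MvPolynomial (Fin m) k)
    (hinj : Function.Injective g₂) (hex : Function.Exact g₂ g₁)
    (hrng : LinearMap.range g₁ = I.restrictScalars _)
    (hhtI : idealHeight I = 2)
    (q f : MvPolynomial (Fin m) k) (hq : q ≠ 0) (hfI : f ∈ I)
    (hcop : IsRelPrime q f) :
    (∃ (h₂ : ((Fin (n - 1) → MvPolynomial (Fin m) k) × MvPolynomial (Fin m) k)
        →ₗ[MvPolynomial (Fin m) k] (Fin (n + 1) → MvPolynomial (Fin m) k))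
      (h₁ : (Fin (n + 1) → MvPolynomial (Fin m) k) →ₗ[MvPolynomial (Fin m) k]
        MvPolynomial (Fin m) k),
      Function.Injective h₂ ∧ Function.Exact h₂ h₁ ∧
        LinearMap.range h₁ = (Ideal.span {q} * I + Ideal.span {f}).restrictScalars _) ∧
    idealHeight (Ideal.span {q} * I + Ideal.span {f}) = 2 := by
  obtain ⟨y, hy⟩ : f ∈ LinearMap.range g₁ := hrng ▸ hfI
  have hq' : q ∈ nonZeroDivisors _ := mem_nonZeroDivisors_of_ne_zero hq
  let E := (LinearEquiv.prodComm _ _ _).trans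
    (Fin.consLinearEquiv (MvPolynomial (Fin m) k) fun _ : Fin (n + 1) => MvPolynomial (Fin m) k)
  refine ⟨⟨E ∘ₗ QFCone.d₂ g₂ q y, QFCone.d₁ g₁ q f ∘ₗ E.symm,
    E.injective.comp (QFCone.injective_d₂ y hinj hq'),
    (E.conj_exact_iff_exact _ _).mpr (QFCone.exact_d₂_d₁ hex hy hq' hcop), ?_⟩,
    idealHeight_span_mul_sup_span hhtI hq hfI hcop⟩
  rw [LinearMap.range_comp_of_range_eq_top _ E.symm.range, QFCone.range_d₁, hrng,
    Submodule.restrictScalars_self, Submodule.restrictScalars_self]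

/-- If `I` is a codimension-2 ideal of a polynomial ring with a Hilbert–Burch resolution
`0 → R^{n−1} → Rⁿ → I → 0`, and `q, f` are forms with `q ≠ 0`, `f ∈ I`, `gcd(q,f) = 1`,
`f ∉ qI`, then `J = qI + (f)` admits a free resolution
`0 → R^{n−1} ⊕ R → R^{n+1} → J → 0`; in particular `J` is perfect of codimension `2`. -/
theorem hilbertBurch_qf_type {k : Type} [Field k] {m n : ℕ} (hn : 2 ≤ n)
    (I : Ideal (MvPolynomial (Fin m) k))
    (g₂ : (Fin (n - 1) → MvPolynomial (Fin m) k) →ₗ[MvPolynomial (Fin m) k]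
      (Fin n → MvPolynomial (Fin m) k))
    (g₁ : (Fin n → MvPolynomial (Fin m) k) →ₗ[MvPolynomial (Fin m) k]
      MvPolynomial (Fin m) k)
    (hinj : Function.Injective g₂) (hex : Function.Exact g₂ g₁)
    (hrng : LinearMap.range g₁ = I.restrictScalars _)
    (hhtI : idealHeight I = 2)
    (q f : MvPolynomial (Fin m) k) (hq : q ≠ 0) (hfI : f ∈ I)
    (hcop : IsRelPrime q f) (hfqI : f ∉ Ideal.span {q} * I) :
    (∃ (h₂ : ((Fin (n - 1) → MvPolynomial (Fin m) k) × MvPolynomial (Fin m) k)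
        →ₗ[MvPolynomial (Fin m) k] (Fin (n + 1) → MvPolynomial (Fin m) k))
      (h₁ : (Fin (n + 1) → MvPolynomial (Fin m) k) →ₗ[MvPolynomial (Fin m) k]
        MvPolynomial (Fin m) k),
      Function.Injective h₂ ∧ Function.Exact h₂ h₁ ∧
        LinearMap.range h₁ = (Ideal.span {q} * I + Ideal.span {f}).restrictScalars _) ∧
    idealHeight (Ideal.span {q} * I + Ideal.span {f}) = 2 :=
  hilbertBurch_qf_type_general I g₂ g₁ hinj hex hrng hhtI q f hq hfI hcop
end

section
/- Let k be a field and let g₀, …, g_{n−1} ∈ k[x₀,…,x_{n−1}] be forms of equal degree defining a birational map G of P^{n−1}. Define F: Pⁿ ⇢ Pⁿ by F = (x₀g₀ : x₀g₁ : ⋯ : x₀g_{n−1} : g₀·xₙ). Then F is a birational map of Pⁿ, and the assignment G ↦ F is multiplicative: if G, G' are two such birational maps of P^{n−1} then the map assigned to G ∘ G' equals (the map assigned to G) ∘ (the map assigned to G') as rational maps of Pⁿ (after cancelling common factors). -/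
/-!
Substituting `σ(G')` into a form of degree `e` pulled back from `P^{n−1}` multiplies it by
`x₀^e`, which gives `σ(G) ∘ σ(G') = x₀^d g'₀ · σ(G ∘ G')` by direct computation.  Applied to a
homogeneous inverse `Q` of `G` (a homogeneous component of any inverse, found by comparing
degrees), and using `σ(w · id) = x₀ w · id`, this shows that `σ(G)` is birational.

What remains is that these factors do not vanish, i.e. `g₀ ≠ 0` and `g'₀ ≠ 0`.  The forms `w xᵢ` are
algebraically independent (their homogeneous pieces `w^e Φ_e(x)` live in distinct degrees) and
are polynomials in the `gⱼ`; if some `gⱼ` vanished they would be `n` algebraically independent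
elements in the image of a polynomial ring in `n − 1` variables.
-/

open MvPolynomial

/-- The splitting `σ` sending a Cremona map `G = (g₀ : ⋯ : g_{n−1})` of `P^{n−1}` to the
de Jonquières map `F = (x₀g₀ : ⋯ : x₀g_{n−1} : g₀xₙ)` of `Pⁿ`. -/
noncomputable def sigmaMap {k : Type} [Field k] {n : ℕ} (hn : 1 ≤ n)
    (g : Fin n → MvPolynomial (Fin n) k) :
    Fin (n + 1) → MvPolynomial (Fin (n + 1)) k :=
  fun i => Fin.lastCases
    (rename Fin.castSucc (g ⟨0, hn⟩) * X (Fin.last n))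
    (fun j : Fin n => X (Fin.castSucc ⟨0, hn⟩) * rename Fin.castSucc (g j)) i

namespace MvPolynomial

theorem IsHomogeneous.aeval_mul_left {R S σ : Type*} [CommSemiring R] [CommSemiring S]
    [Algebra R S] {p : MvPolynomial σ R} {e : ℕ} (hp : p.IsHomogeneous e) (c : S) (f : σ → S) :
    MvPolynomial.aeval (fun i => c * f i) p = c ^ e * MvPolynomial.aeval f p := by
  simp only [aeval_def, eval₂_eq, Finset.mul_sum]
  refine Finset.sum_congr rfl fun u hu => ?_
  have hdeg : ∑ i ∈ u.support, u i = e := by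
    rw [← hp (mem_support_iff.mp hu), Finsupp.weight_apply]
    simp [Finsupp.sum]
  rw [Finset.prod_congr rfl fun i _ => mul_pow c (f i) (u i), Finset.prod_mul_distrib,
    Finset.prod_pow_eq_pow_sum, hdeg]
  ring

section GradedAlgebra

attribute [local instance] gradedAlgebra

theorem homogeneousComponent_succ_mul_X {R σ : Type*} [CommSemiring R] (m : ℕ)
    (p : MvPolynomial σ R) (i : σ) :
    homogeneousComponent (m + 1) (p * X i) = homogeneousComponent m p * X i := by
  have h := DirectSum.coe_decompose_mul_of_right_mem_of_le (homogeneousSubmodule σ R) (a := p)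
    (isHomogeneous_X R i) (Nat.le_add_left 1 m)
  have hdecompose (q : MvPolynomial σ R) (n : ℕ) :
      (DirectSum.decompose (homogeneousSubmodule σ R) q n : MvPolynomial σ R)
        = homogeneousComponent n q :=
    decomposition.decompose'_apply q n
  rwa [hdecompose, hdecompose] at h

end GradedAlgebra

section HomogeneousSubstitution

variable {R σ τ : Type*} [CommSemiring R] {d : ℕ} {g : σ → MvPolynomial τ R}

theorem homogeneousComponent_aeval (hg : ∀ i, (g i).IsHomogeneous d) (m : ℕ)
    (p : MvPolynomial σ R) :
    homogeneousComponent m (aeval g p)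
      = ∑ e ∈ Finset.range (p.totalDegree + 1),
          if m = d * e then aeval g (homogeneousComponent e p) else 0 := by
  conv_lhs => rw [← sum_homogeneousComponent p]
  rw [map_sum, map_sum]
  exact Finset.sum_congr rfl fun e _ =>
    homogeneousComponent_of_mem ((homogeneousComponent_isHomogeneous e p).aeval g hg)

theorem homogeneousComponent_aeval_of_not_dvd (hg : ∀ i, (g i).IsHomogeneous d) {m : ℕ}
    (hm : ¬ d ∣ m) (p : MvPolynomial σ R) :
    homogeneousComponent m (aeval g p) = 0 := by
  rw [homogeneousComponent_aeval hg]
  exact Finset.sum_eq_zero fun e _ => if_neg fun h => hm ⟨e, h⟩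

theorem homogeneousComponent_mul_aeval (hg : ∀ i, (g i).IsHomogeneous d) (hd : d ≠ 0) (e : ℕ)
    (p : MvPolynomial σ R) :
    homogeneousComponent (d * e) (aeval g p) = aeval g (homogeneousComponent e p) := by
  rw [homogeneousComponent_aeval hg, Finset.sum_eq_single e]
  · exact if_pos rfl
  · exact fun b _ hb =>
      if_neg fun h => hb (Nat.eq_of_mul_eq_mul_left (Nat.pos_of_ne_zero hd) h).symm
  · intro he
    rw [homogeneousComponent_eq_zero e p (by simpa using he), map_zero, ite_self]

end HomogeneousSubstitution

theorem algebraicIndependent_mul_X {R σ : Type*} [CommRing R] [IsDomain R]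
    {w : MvPolynomial σ R} {t : ℕ} (hw : w.IsHomogeneous t) (hw0 : w ≠ 0) :
    AlgebraicIndependent R fun i => w * X i := by
  rw [algebraicIndependent_iff_injective_aeval, injective_iff_map_eq_zero]
  intro Φ hΦ
  have hwX (i : σ) : (w * X i).IsHomogeneous (t + 1) := hw.mul (isHomogeneous_X R i)
  have hcomponent (e : ℕ) : homogeneousComponent e Φ = 0 := by
    have h := homogeneousComponent_mul_aeval hwX t.succ_ne_zero e Φ
    rw [hΦ, map_zero, (homogeneousComponent_isHomogeneous e Φ).aeval_mul_left,
      aeval_X_left_apply] at h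
    exact (mul_eq_zero.mp h.symm).resolve_left (pow_ne_zero e hw0)
  rw [← sum_homogeneousComponent Φ]
  exact Finset.sum_eq_zero fun e _ => hcomponent e

theorem ne_zero_of_algebraicIndependent_aeval {R A σ ι : Type*} [CommRing R] [IsDomain R]
    [CommRing A] [Algebra R A] [Fintype σ] [Fintype ι] (hcard : Fintype.card σ ≤ Fintype.card ι)
    {g : σ → A} {q : ι → MvPolynomial σ R} (hind : AlgebraicIndependent R fun i => aeval g (q i))
    (j₀ : σ) : g j₀ ≠ 0 := by
  classical
  intro hj₀
  -- if `g j₀ = 0`, then `aeval g` factors through the polynomial ring in the other variables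
  let π : MvPolynomial σ R →ₐ[R] MvPolynomial {j // j ≠ j₀} R :=
    aeval fun j => if h : j = j₀ then 0 else X ⟨j, h⟩
  have hfactor : (aeval fun j : {j // j ≠ j₀} => g j).comp π = aeval g :=
    algHom_ext fun j => by by_cases h : j = j₀ <;> simp [π, h, hj₀]
  have hπ : AlgebraicIndependent R (π ∘ q) :=
    .of_comp (aeval fun j : {j // j ≠ j₀} => g j) (by
      rw [← Function.comp_assoc, ← AlgHom.coe_comp, hfactor]; exact hind)
  have hle := hπ.lift_cardinalMk_le_trdeg
  simp only [Cardinal.mk_fintype, Cardinal.lift_natCast, ne_eq, trdeg_of_isDomain,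
    Fintype.card_subtype_compl, Fintype.card_unique, Nat.cast_le] at hle
  have : 0 < Fintype.card σ := Fintype.card_pos_iff.mpr ⟨j₀⟩
  omega

theorem exists_homogeneousComponent_aeval_eq_mul_X {R σ τ : Type*} [CommRing R]
    [IsDomain R] [Nonempty τ] {d : ℕ} {g : σ → MvPolynomial τ R} {q : τ → MvPolynomial σ R}
    {w : MvPolynomial τ R} (hg : ∀ i, (g i).IsHomogeneous d) (hw0 : w ≠ 0)
    (hq : ∀ i, aeval (R := R) g (q i) = w * X i) :
    ∃ e m, homogeneousComponent m w ≠ 0 ∧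
      ∀ i, aeval g (homogeneousComponent e (q i)) = homogeneousComponent m w * X i := by
  obtain ⟨m, hm⟩ : ∃ m, homogeneousComponent m w ≠ 0 := by
    by_contra! h
    exact hw0 (by rw [← sum_homogeneousComponent w]; exact Finset.sum_eq_zero fun e _ => h e)
  have hcomp (i : τ) : homogeneousComponent (m + 1) (aeval g (q i))
      = homogeneousComponent m w * X i := by
    rw [hq i, homogeneousComponent_succ_mul_X]
  obtain ⟨i₀⟩ := ‹Nonempty τ›
  obtain ⟨e, he⟩ : d ∣ m + 1 := by
    by_contra h
    exact mul_ne_zero hm (X_ne_zero i₀)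
      (by rw [← hcomp i₀, homogeneousComponent_aeval_of_not_dvd hg h])
  have hd : d ≠ 0 := by rintro rfl; simp at he
  exact ⟨e, m, hm, fun i => by rw [← homogeneousComponent_mul_aeval hg hd, ← he, hcomp]⟩

theorem ne_zero_of_aeval_eq_mul_X {R σ : Type*} [CommRing R] [IsDomain R]
    [Fintype σ] {d : ℕ} {g q : σ → MvPolynomial σ R} {w : MvPolynomial σ R}
    (hg : ∀ i, (g i).IsHomogeneous d) (hw0 : w ≠ 0) (hq : ∀ i, aeval (R := R) g (q i) = w * X i)
    (j : σ) : g j ≠ 0 := by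
  have : Nonempty σ := ⟨j⟩
  obtain ⟨e, m, hm, hqm⟩ := exists_homogeneousComponent_aeval_eq_mul_X hg hw0 hq
  refine ne_zero_of_algebraicIndependent_aeval le_rfl
    (q := fun i => homogeneousComponent e (q i)) ?_ j
  simpa only [hqm] using algebraicIndependent_mul_X (homogeneousComponent_isHomogeneous m w) hm

end MvPolynomial

section sigmaMap

variable {k : Type} [Field k] {n : ℕ} (hn : 1 ≤ n)

@[simp]
theorem sigmaMap_castSucc (g : Fin n → MvPolynomial (Fin n) k) (j : Fin n) :
    sigmaMap hn g j.castSucc = X (Fin.castSucc ⟨0, hn⟩) * rename Fin.castSucc (g j) := by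
  simp [sigmaMap]

@[simp]
theorem sigmaMap_last (g : Fin n → MvPolynomial (Fin n) k) :
    sigmaMap hn g (Fin.last n) = rename Fin.castSucc (g ⟨0, hn⟩) * X (Fin.last n) := by
  simp [sigmaMap]

theorem sigmaMap_mul_X (w : MvPolynomial (Fin n) k) (i : Fin (n + 1)) :
    sigmaMap hn (fun j => w * X j) i
      = X (Fin.castSucc ⟨0, hn⟩) * rename Fin.castSucc w * X i := by
  induction i using Fin.lastCases <;>
    simp only [sigmaMap_castSucc, sigmaMap_last, map_mul, rename_X] <;> ring

theorem aeval_sigmaMap_rename (g : Fin n → MvPolynomial (Fin n) k) {p : MvPolynomial (Fin n) k}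
    {e : ℕ} (hp : p.IsHomogeneous e) :
    aeval (sigmaMap hn g) (rename Fin.castSucc p)
      = X (Fin.castSucc ⟨0, hn⟩) ^ e * rename Fin.castSucc (aeval g p) := by
  have hcomp : sigmaMap hn g ∘ Fin.castSucc
      = fun j => X (Fin.castSucc ⟨0, hn⟩) * rename Fin.castSucc (g j) :=
    funext (sigmaMap_castSucc hn g)
  rw [aeval_rename, hcomp, hp.aeval_mul_left, ← comp_aeval_apply]

theorem aeval_sigmaMap_sigmaMap {d : ℕ} {g : Fin n → MvPolynomial (Fin n) k}
    (hg : ∀ i, (g i).IsHomogeneous d) (g' : Fin n → MvPolynomial (Fin n) k) (i : Fin (n + 1)) :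
    aeval (sigmaMap hn g') (sigmaMap hn g i)
      = X (Fin.castSucc ⟨0, hn⟩) ^ d * rename Fin.castSucc (g' ⟨0, hn⟩)
        * sigmaMap hn (fun j => aeval g' (g j)) i := by
  induction i using Fin.lastCases with
  | last => simp only [sigmaMap_last, map_mul, aeval_sigmaMap_rename hn g' (hg _), aeval_X]; ring
  | cast j =>
    simp only [sigmaMap_castSucc, map_mul, aeval_sigmaMap_rename hn g' (hg _), aeval_X]; ring

end sigmaMap

/-- If `g` defines a birational map `G` of `P^{n−1}` then `σ(G)` is a birational map of
`Pⁿ`, and `σ` is multiplicative: `σ(G ∘ G') = σ(G) ∘ σ(G')` as rational maps of `Pⁿ`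
(i.e. up to a common nonzero factor). -/
theorem sigma_birational_and_multiplicative {k : Type} [Field k] {n : ℕ} (hn : 1 ≤ n)
    {d d' : ℕ} (g g' : Fin n → MvPolynomial (Fin n) k)
    (hg : ∀ i, (g i).IsHomogeneous d) (hg' : ∀ i, (g' i).IsHomogeneous d')
    -- `g` and `g'` define birational maps of `P^{n−1}`:
    (hbir : ∃ (g2inv : Fin n → MvPolynomial (Fin n) k) (w : MvPolynomial (Fin n) k),
      w ≠ 0 ∧ ∀ i, aeval (R := k) g (g2inv i) = w * X i)
    (hbir' : ∃ (g2inv' : Fin n → MvPolynomial (Fin n) k) (w' : MvPolynomial (Fin n) k),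
      w' ≠ 0 ∧ ∀ i, aeval (R := k) g' (g2inv' i) = w' * X i) :
    -- `σ(g)` is a birational map of `Pⁿ`:
    (∃ (Ginv : Fin (n + 1) → MvPolynomial (Fin (n + 1)) k)
        (w : MvPolynomial (Fin (n + 1)) k), w ≠ 0 ∧
        ∀ i, aeval (R := k) (sigmaMap hn g) (Ginv i) = w * X i) ∧
    -- multiplicativity: `σ(g ∘ g') = σ(g) ∘ σ(g')` up to a common nonzero factor:
    (∃ h : MvPolynomial (Fin (n + 1)) k, h ≠ 0 ∧
      ∀ i, aeval (R := k) (sigmaMap hn g') (sigmaMap hn g i)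
        = h * sigmaMap hn (fun j => aeval (R := k) g' (g j)) i) := by
  have hX₀ : (X (Fin.castSucc ⟨0, hn⟩) : MvPolynomial (Fin (n + 1)) k) ≠ 0 := X_ne_zero _
  have hrename {p : MvPolynomial (Fin n) k} (hp : p ≠ 0) : rename Fin.castSucc p ≠ 0 :=
    (map_ne_zero_iff _ (rename_injective _ (Fin.castSucc_injective n))).mpr hp
  obtain ⟨q, w, hw0, hq⟩ := hbir
  obtain ⟨q', w', hw'0, hq'⟩ := hbir'
  have : Nonempty (Fin n) := ⟨⟨0, hn⟩⟩
  obtain ⟨e, m, hm, hqm⟩ := exists_homogeneousComponent_aeval_eq_mul_X hg hw0 hq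
  have hg0 := ne_zero_of_aeval_eq_mul_X hg hw0 hq ⟨0, hn⟩
  have hg'0 := ne_zero_of_aeval_eq_mul_X hg' hw'0 hq' ⟨0, hn⟩
  refine ⟨⟨sigmaMap hn fun j => homogeneousComponent e (q j),
    X (Fin.castSucc ⟨0, hn⟩) ^ e * rename Fin.castSucc (g ⟨0, hn⟩)
      * (X (Fin.castSucc ⟨0, hn⟩) * rename Fin.castSucc (homogeneousComponent m w)), ?_, ?_⟩,
    X (Fin.castSucc ⟨0, hn⟩) ^ d * rename Fin.castSucc (g' ⟨0, hn⟩), ?_,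
    aeval_sigmaMap_sigmaMap hn hg g'⟩
  · exact mul_ne_zero (mul_ne_zero (pow_ne_zero _ hX₀) (hrename hg0))
      (mul_ne_zero hX₀ (hrename hm))
  · intro i
    rw [aeval_sigmaMap_sigmaMap hn (fun j => homogeneousComponent_isHomogeneous e (q j))]
    simp only [hqm, sigmaMap_mul_X, mul_assoc]
  · exact mul_ne_zero (pow_ne_zero _ hX₀) (hrename hg'0)
end

section
/- The map T₃ of P³ given by (x₀x₁x₂ : x₀²x₂ : x₀²x₁ : x₁x₂x₃) is a Cremona (birational) map and is an involution: T₃ ∘ T₃ is the identity rational map of P³. -/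
open MvPolynomial

/-- The cubic map `T₃ = (x₀x₁x₂ : x₀²x₂ : x₀²x₁ : x₁x₂x₃)` of `P³`. -/
noncomputable def T₃ {k : Type} [Field k] : Fin 4 → MvPolynomial (Fin 4) k :=
  ![X 0 * X 1 * X 2, X 0 ^ 2 * X 2, X 0 ^ 2 * X 1, X 1 * X 2 * X 3]

/-- `T₃` is a Cremona (birational) map of `P³` and an involution: composing it with
itself yields the identity rational map (the common factor being `x₀⁴x₁²x₂²`). -/
theorem T₃_cremona_involution {k : Type} [Field k] :
    ∃ h : MvPolynomial (Fin 4) k, h ≠ 0 ∧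
      ∀ i : Fin 4, aeval (R := k) (T₃ (k := k)) (T₃ i) = h * X i := by
  refine ⟨X 0 ^ 4 * X 1 ^ 2 * X 2 ^ 2, ?_, ?_⟩
  · exact mul_ne_zero (mul_ne_zero (pow_ne_zero _ (X_ne_zero _))
      (pow_ne_zero _ (X_ne_zero _))) (pow_ne_zero _ (X_ne_zero _))
  · intro i
    fin_cases i <;> simp [T₃] <;> ring
end
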